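/- arXiv:1909.03562 — 2 statements merged into one kernel-verified Lean document; each statement's English description precedes it below -/
import Mathlib

section
/- Let Syrac(ℤ/3^nℤ) denote the random variable F_n(a₁,…,aₙ) mod 3^n where (a₁,…,aₙ) are iid Geometric(2) random variables on ℕ₊ (P(a=k)=2^{-k}). Then for k ≤ n, the reduction of Syrac(ℤ/3^nℤ) modulo 3^k has the same distribution as Syrac(ℤ/3^kℤ). -/
/-- The image of the `n`-Syracuse offset map `F_n` in `ℤ/3^nℤ`, via the unique ring
homomorphism `ℤ[1/2] → ℤ/3^nℤ` (so `2^{-a}` maps to `(2 : ZMod (3^n))⁻¹ ^ a`). -/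
def syrFZ (n : ℕ) (a : Fin n → ℕ+) : ZMod (3 ^ n) :=
  ∑ m : Fin n, 3 ^ (n - 1 - (m : ℕ))
      * (2 : ZMod (3 ^ n))⁻¹ ^ (∑ i ∈ Finset.Ici m, (a i : ℕ))

/-- The distribution of the Syracuse random variable `Syrac(ℤ/3^nℤ)`:
`P(Syrac(ℤ/3^nℤ) = x) = Σ_{ā : F_n(ā) ≡ x mod 3^n} 2^{-(a₁+⋯+aₙ)}`,
where the `aᵢ` are iid `Geom(2)`. -/
noncomputable def syracP (n : ℕ) (x : ZMod (3 ^ n)) : ℝ :=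
  ∑' a : Fin n → ℕ+,
    if syrFZ n a = x then (2:ℝ) ^ (-(∑ i, ((a i : ℕ) : ℤ))) else 0

lemma hasSum_pnat_geom : HasSum (fun x : ℕ+ => (2:ℝ) ^ (-((x:ℕ):ℤ))) 1 := by
  have h2 : HasSum (fun k : ℕ => (2:ℝ)⁻¹ ^ (k+1)) 1 := by
    have h := hasSum_geometric_two.mul_left (2:ℝ)⁻¹
    simp only [one_div, ← pow_succ'] at h
    rw [show (2:ℝ)⁻¹ * 2 = 1 by norm_num] at h
    exact h
  refine (Equiv.pnatEquivNat.symm.hasSum_iff).1 ?_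
  convert h2 using 2 with k
  show (2:ℝ) ^ (-(((Equiv.pnatEquivNat.symm k : ℕ+) : ℕ):ℤ)) = _
  have : ((Equiv.pnatEquivNat.symm k : ℕ+) : ℕ) = k + 1 := by
    simp [Equiv.pnatEquivNat]
  rw [this]
  rw [zpow_neg, ← zpow_natCast, ← inv_zpow]

lemma hasSum_pi_geom : ∀ n : ℕ,
    HasSum (fun a : Fin n → ℕ+ => (2:ℝ) ^ (-(∑ i, ((a i : ℕ) : ℤ)))) 1 := by
  intro n
  induction n with
  | zero =>
    have := hasSum_single (f := fun a : Fin 0 → ℕ+ => (2:ℝ) ^ (-(∑ i, ((a i : ℕ) : ℤ))))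
      default (fun b hb => absurd (Subsingleton.elim b default) hb)
    simpa using this
  | succ n ih =>
    have hnn1 : 0 ≤ (fun x : ℕ+ => (2:ℝ) ^ (-((x:ℕ):ℤ))) := fun x => by positivity
    have hnn2 : 0 ≤ (fun a : Fin n → ℕ+ => (2:ℝ) ^ (-(∑ i, ((a i : ℕ) : ℤ)))) :=
      fun x => by positivity
    have hs := hasSum_pnat_geom.summable.mul_of_nonneg ih.summable hnn1 hnn2
    have key := hasSum_pnat_geom.mul ih hs
    rw [one_mul] at key
    refine ((Fin.consEquiv (fun _ : Fin (n+1) => ℕ+)).hasSum_iff).1 ?_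
    have hfun : ((fun a : Fin (n+1) → ℕ+ => (2:ℝ)^(-(∑ i, ((a i:ℕ):ℤ)))) ∘ (Fin.consEquiv fun _ => ℕ+))
        = fun p : ℕ+ × (Fin n → ℕ+) => (2:ℝ)^(-((p.1:ℕ):ℤ)) * (2:ℝ)^(-(∑ i, ((p.2 i:ℕ):ℤ))) := by
      funext p
      show (2:ℝ)^(-(∑ i, (((Fin.cons (α := fun _ => ℕ+) p.1 p.2 : Fin (n+1) → ℕ+) i : ℕ):ℤ))) = _
      rw [Fin.sum_univ_succ]
      simp only [Fin.cons_zero, Fin.cons_succ]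
      rw [neg_add, zpow_add₀ (by norm_num : (2:ℝ) ≠ 0)]
    rw [hfun]
    exact key

lemma fubini_step (n : ℕ) (P : (Fin n → ℕ+) → Prop) [DecidablePred P] :
    ∑' a : Fin (n+1) → ℕ+,
      (if P (Fin.tail a) then (2:ℝ) ^ (-(∑ i, ((a i : ℕ) : ℤ))) else 0)
    = ∑' b : Fin n → ℕ+, (if P b then (2:ℝ) ^ (-(∑ i, ((b i : ℕ) : ℤ))) else 0) := by
  set v : (Fin n → ℕ+) → ℝ := fun b => if P b then (2:ℝ) ^ (-(∑ i, ((b i : ℕ) : ℤ))) else 0 with hv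
  have hvnn : 0 ≤ v := fun b => by dsimp [v]; split <;> positivity
  have hvle : ∀ b, v b ≤ (2:ℝ) ^ (-(∑ i, ((b i : ℕ) : ℤ))) := fun b => by
    dsimp [v]; split
    · exact le_refl _
    · positivity
  have hvs : Summable v := Summable.of_nonneg_of_le hvnn hvle (hasSum_pi_geom n).summable
  have hnn1 : 0 ≤ (fun x : ℕ+ => (2:ℝ) ^ (-((x:ℕ):ℤ))) := fun x => by positivity
  have hs := hasSum_pnat_geom.summable.mul_of_nonneg hvs hnn1 hvnn
  have key := hasSum_pnat_geom.mul hvs.hasSum hs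
  rw [one_mul] at key
  have hfun : ((fun a : Fin (n+1) → ℕ+ => if P (Fin.tail a) then (2:ℝ) ^ (-(∑ i, ((a i : ℕ):ℤ))) else 0)
        ∘ (Fin.consEquiv fun _ => ℕ+))
      = fun p : ℕ+ × (Fin n → ℕ+) => (2:ℝ)^(-((p.1:ℕ):ℤ)) * v p.2 := by
    funext p
    show (if P (Fin.tail (Fin.cons (α := fun _ => ℕ+) p.1 p.2)) then (2:ℝ) ^ (-(∑ i, (((Fin.cons (α := fun _ => ℕ+) p.1 p.2 : Fin (n+1) → ℕ+) i : ℕ):ℤ))) else 0) = _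
    rw [Fin.tail_cons, hv]
    dsimp only
    rw [mul_ite, mul_zero]
    congr 1
    rw [Fin.sum_univ_succ]
    simp only [Fin.cons_zero, Fin.cons_succ]
    rw [neg_add, zpow_add₀ (by norm_num : (2:ℝ) ≠ 0)]
  have := (((Fin.consEquiv (fun _ : Fin (n+1) => ℕ+)).hasSum_iff).1 (hfun ▸ key))
  exact this.tsum_eq

lemma isUnit_two_zmod (N : ℕ) : IsUnit (2 : ZMod (3 ^ N)) := by
  have := (ZMod.isUnit_iff_coprime 2 (3 ^ N)).2 (Nat.Coprime.pow_right N (by decide))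
  simpa using this

lemma cast_two_inv {M N : ℕ} (h : (3:ℕ)^N ∣ 3^M) :
    ZMod.castHom h (ZMod (3^N)) (2 : ZMod (3^M))⁻¹ = (2 : ZMod (3^N))⁻¹ := by
  have h1 : (2 : ZMod (3^M)) * (2 : ZMod (3^M))⁻¹ = 1 :=
    ZMod.mul_inv_of_unit _ (isUnit_two_zmod M)
  have h2 : (2 : ZMod (3^N)) * ZMod.castHom h (ZMod (3^N)) (2 : ZMod (3^M))⁻¹ = 1 := by
    have := congrArg (ZMod.castHom h (ZMod (3^N))) h1
    rw [map_mul, map_one, map_ofNat] at this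
    exact this
  have h3 : (2 : ZMod (3^N)) * (2 : ZMod (3^N))⁻¹ = 1 :=
    ZMod.mul_inv_of_unit _ (isUnit_two_zmod N)
  calc ZMod.castHom h (ZMod (3^N)) (2 : ZMod (3^M))⁻¹
      = ((2 : ZMod (3^N))⁻¹ * 2) * ZMod.castHom h (ZMod (3^N)) (2 : ZMod (3^M))⁻¹ := by
        rw [mul_comm _ (2 : ZMod (3^N)), h3, one_mul]
    _ = (2 : ZMod (3^N))⁻¹ := by rw [mul_assoc, h2, mul_one]

lemma Ici_succ_map {n : ℕ} (j : Fin n) :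
    Finset.Ici (Fin.succ j) = (Finset.Ici j).map (Fin.succEmb n) := by
  ext x
  simp only [Finset.mem_Ici, Finset.mem_map, Fin.coe_succEmb]
  constructor
  · intro hx
    rcases Fin.eq_zero_or_eq_succ x with rfl | ⟨y, rfl⟩
    · exact absurd hx (by simp [Fin.le_def])
    · exact ⟨y, by simpa [Fin.succ_le_succ_iff] using hx, rfl⟩
  · rintro ⟨y, hy, rfl⟩
    exact (Fin.succ_le_succ_iff).2 hy

lemma cast_syrFZ (n : ℕ) (a : Fin (n+1) → ℕ+) :
    ZMod.castHom (pow_dvd_pow 3 (Nat.le_succ n)) (ZMod (3^n)) (syrFZ (n+1) a)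
      = syrFZ n (Fin.tail a) := by
  unfold syrFZ
  rw [map_sum, Fin.sum_univ_succ]
  have hz : (ZMod.castHom (pow_dvd_pow 3 (Nat.le_succ n)) (ZMod (3^n)))
      ((3:ZMod (3^(n+1))) ^ (n + 1 - 1 - ((0 : Fin (n+1)) : ℕ))
        * (2 : ZMod (3 ^ (n+1)))⁻¹ ^ (∑ i ∈ Finset.Ici (0 : Fin (n+1)), (a i : ℕ))) = 0 := by
    rw [map_mul, map_pow]
    have : ((ZMod.castHom (pow_dvd_pow 3 (Nat.le_succ n)) (ZMod (3^n))) (3:ZMod (3^(n+1)))) ^ (n + 1 - 1 - ((0 : Fin (n+1)) : ℕ)) = 0 := by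
      rw [map_ofNat]
      simp only [Fin.val_zero, Nat.add_sub_cancel, Nat.sub_zero]
      have : ((3:ZMod (3^n))) ^ n = ((3^n : ℕ) : ZMod (3^n)) := by push_cast; ring
      rw [this, ZMod.natCast_self]
    rw [this, zero_mul]
  rw [hz, zero_add]
  refine Finset.sum_congr rfl fun j _ => ?_
  rw [map_mul, map_pow, map_pow, map_ofNat, cast_two_inv]
  congr 1
  · congr 1
    simp [Fin.val_succ, Nat.sub_sub, Nat.add_comm]
  · congr 1
    rw [Ici_succ_map, Finset.sum_map]
    rfl

/-- For `k ≤ n`, the reduction of `Syrac(ℤ/3^nℤ)` modulo `3^k` has the same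
distribution as `Syrac(ℤ/3^kℤ)`. -/
theorem stmt_7 (n k : ℕ) (h : k ≤ n) (y : ZMod (3 ^ k)) :
    (∑' a : Fin n → ℕ+,
      if ZMod.castHom (pow_dvd_pow 3 h) (ZMod (3 ^ k)) (syrFZ n a) = y then
        (2:ℝ) ^ (-(∑ i, ((a i : ℕ) : ℤ))) else 0)
    = syracP k y := by
  induction n, h using Nat.le_induction with
  | base =>
    simp only [ZMod.castHom_apply, ZMod.cast_id', id_eq]
    rfl
  | succ n hkn ih =>
    have hcomp : ∀ x : ZMod (3^(n+1)),
        ZMod.castHom (pow_dvd_pow 3 (Nat.le_succ_of_le hkn)) (ZMod (3^k)) x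
          = ZMod.castHom (pow_dvd_pow 3 hkn) (ZMod (3^k))
              (ZMod.castHom (pow_dvd_pow 3 (Nat.le_succ n)) (ZMod (3^n)) x) := by
      intro x
      rw [← RingHom.comp_apply, ZMod.castHom_comp]
    calc (∑' a : Fin (n+1) → ℕ+,
            if ZMod.castHom (pow_dvd_pow 3 (Nat.le_succ_of_le hkn)) (ZMod (3 ^ k)) (syrFZ (n+1) a) = y then
              (2:ℝ) ^ (-(∑ i, ((a i : ℕ) : ℤ))) else 0)
        = ∑' a : Fin (n+1) → ℕ+,
            if ZMod.castHom (pow_dvd_pow 3 hkn) (ZMod (3 ^ k)) (syrFZ n (Fin.tail a)) = y then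
              (2:ℝ) ^ (-(∑ i, ((a i : ℕ) : ℤ))) else 0 := by
          refine tsum_congr fun a => ?_
          rw [hcomp, cast_syrFZ]
      _ = ∑' b : Fin n → ℕ+,
            if ZMod.castHom (pow_dvd_pow 3 hkn) (ZMod (3 ^ k)) (syrFZ n b) = y then
              (2:ℝ) ^ (-(∑ i, ((b i : ℕ) : ℤ))) else 0 :=
          fubini_step n (fun b => ZMod.castHom (pow_dvd_pow 3 hkn) (ZMod (3 ^ k)) (syrFZ n b) = y)
      _ = syracP k y := ih
end

section
/- For any n ∈ ℕ and x ∈ ℤ/3^{n+1}ℤ, P(Syrac(ℤ/3^{n+1}ℤ) = x) = (1 - 2^{-2·3^n})^{-1} · Σ_{1 ≤ a ≤ 2·3^n, 2^a x ≡ 1 mod 3} 2^{-a} · P(Syrac(ℤ/3^nℤ) = (2^a x - 1)/3), where (2^a x - 1)/3 is interpreted as an element of ℤ/3^nℤ. -/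
lemma isUnit_two (k : ℕ) : IsUnit (2 : ZMod (3^k)) := by
  have : ((2:ℕ) : ZMod (3^k)) = 2 := by push_cast; ring
  rw [← this, ZMod.isUnit_iff_coprime]
  exact Nat.Coprime.pow_right _ (by decide)

lemma two_mul_inv_two (k : ℕ) : (2 : ZMod (3^k)) * 2⁻¹ = 1 :=
  ZMod.mul_inv_of_unit _ (isUnit_two k)

lemma inv_two_mul_two (k : ℕ) : (2 : ZMod (3^k))⁻¹ * 2 = 1 :=
  ZMod.inv_mul_of_unit _ (isUnit_two k)

lemma castHom_inv_two (n : ℕ) :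
    ZMod.castHom (pow_dvd_pow 3 (Nat.le_succ n)) (ZMod (3^n))
      (2 : ZMod (3^(n+1)))⁻¹ = (2 : ZMod (3^n))⁻¹ := by
  symm
  apply ZMod.inv_eq_of_mul_eq_one
  have : ((2 : ZMod (3^(n+1))) * 2⁻¹) = 1 := two_mul_inv_two (n+1)
  calc (2 : ZMod (3^n)) * ZMod.castHom _ (ZMod (3^n)) (2 : ZMod (3^(n+1)))⁻¹
      = ZMod.castHom (pow_dvd_pow 3 (Nat.le_succ n)) (ZMod (3^n)) ((2:ZMod (3^(n+1))) * 2⁻¹) := by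
        rw [map_mul, map_ofNat]
    _ = 1 := by rw [this, map_one]

lemma three_mul_congr (n : ℕ) (u v : ZMod (3^(n+1)))
    (h : ZMod.castHom (pow_dvd_pow 3 (Nat.le_succ n)) (ZMod (3^n)) u
       = ZMod.castHom (pow_dvd_pow 3 (Nat.le_succ n)) (ZMod (3^n)) v) :
    3 * u = 3 * v := by
  have hw : ZMod.castHom (pow_dvd_pow 3 (Nat.le_succ n)) (ZMod (3^n)) (u - v) = 0 := by
    rw [map_sub, h, sub_self]
  haveI : NeZero ((3:ℕ)^(n+1)) := ⟨by positivity⟩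
  have huv : (((u - v).val : ℕ) : ZMod (3^n)) = 0 := by
    rwa [ZMod.castHom_apply, ← ZMod.natCast_val] at hw
  have hdvd : (3:ℕ)^n ∣ (u - v).val := (ZMod.natCast_eq_zero_iff _ _).1 huv
  obtain ⟨s, hs⟩ := hdvd
  have : 3 * (u - v) = 0 := by
    have : (u - v) = (((u-v).val : ℕ) : ZMod (3^(n+1))) := by rw [ZMod.natCast_val, ZMod.cast_id]
    rw [this, hs]
    push_cast
    rw [show ((3:ZMod (3^(n+1))) * (3^n * s)) = (3^(n+1) : ℕ) * s by push_cast; ring,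
      ZMod.natCast_self, zero_mul]
  linear_combination this

lemma three_mul_lift_inj (n : ℕ) (y z : ZMod (3^n))
    (h : 3 * ((y.val : ℕ) : ZMod (3^(n+1))) = 3 * ((z.val : ℕ) : ZMod (3^(n+1)))) : y = z := by
  haveI : NeZero ((3:ℕ)^n) := ⟨by positivity⟩
  haveI : NeZero ((3:ℕ)^(n+1)) := ⟨by positivity⟩
  have h' : (((3 * y.val : ℕ)) : ZMod (3^(n+1))) = ((3 * z.val : ℕ) : ZMod (3^(n+1))) := by
    push_cast; exact h
  have hy : 3 * y.val < 3^(n+1) := by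
    have := ZMod.val_lt y; rw [pow_succ, mul_comm (3^n) 3]; omega
  have hz : 3 * z.val < 3^(n+1) := by
    have := ZMod.val_lt z; rw [pow_succ, mul_comm (3^n) 3]; omega
  have := congrArg ZMod.val h'
  rw [ZMod.val_cast_of_lt hy, ZMod.val_cast_of_lt hz] at this
  have hv : y.val = z.val := by omega
  calc y = ((y.val : ℕ) : ZMod (3^n)) := by rw [ZMod.natCast_val, ZMod.cast_id]
    _ = ((z.val : ℕ) : ZMod (3^n)) := by rw [hv]
    _ = z := by rw [ZMod.natCast_val, ZMod.cast_id]

lemma Ici_castSucc (n : ℕ) (m : Fin n) :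
    Finset.Ici (Fin.castSucc m) = insert (Fin.last n)
      ((Finset.Ici m).map ⟨Fin.castSucc, Fin.castSucc_injective n⟩) := by
  ext i
  simp only [Finset.mem_Ici, Finset.mem_insert, Finset.mem_map, Fin.le_def, Fin.coe_castSucc,
    Fin.val_last, Fin.ext_iff, Function.Embedding.coeFn_mk]
  constructor
  · intro hi
    rcases Nat.lt_or_ge (i : ℕ) n with hlt | hge
    · exact Or.inr ⟨⟨i, hlt⟩, hi, rfl⟩
    · left; have := i.isLt; omega
  · rintro (hi | ⟨j, hj, hji⟩)
    · have := m.isLt; omega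
    · omega

lemma sum_Ici_snoc (n : ℕ) (b : Fin n → ℕ+) (c : ℕ+) (m : Fin n) :
    ∑ i ∈ Finset.Ici (Fin.castSucc m), ((Fin.snoc b c : Fin (n+1) → ℕ+) i : ℕ)
      = (∑ i ∈ Finset.Ici m, (b i : ℕ)) + c := by
  rw [Ici_castSucc, Finset.sum_insert, Finset.sum_map]
  · simp only [Function.Embedding.coeFn_mk, Fin.snoc_castSucc, Fin.snoc_last]
    ring
  · simp only [Finset.mem_map, Function.Embedding.coeFn_mk]
    rintro ⟨j, -, hj⟩
    have := congrArg Fin.val hj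
    simp only [Fin.coe_castSucc, Fin.val_last] at this
    have := j.isLt; omega

lemma sum_snoc (n : ℕ) (b : Fin n → ℕ+) (c : ℕ+) :
    ∑ i : Fin (n+1), ((Fin.snoc b c : Fin (n+1) → ℕ+) i : ℕ) = (∑ i, (b i : ℕ)) + c := by
  rw [Fin.sum_univ_castSucc]
  simp [Fin.snoc_castSucc, Fin.snoc_last]


lemma pow_mul_inv_pow (k c s : ℕ) :
    (2 : ZMod (3^k))^c * (2 : ZMod (3^k))⁻¹^(s + c) = (2 : ZMod (3^k))⁻¹^s := by
  rw [pow_add]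
  calc (2:ZMod (3^k))^c * ((2:ZMod (3^k))⁻¹^s * (2:ZMod (3^k))⁻¹^c)
      = (2:ZMod (3^k))⁻¹^s * ((2:ZMod (3^k)) * 2⁻¹)^c := by rw [mul_pow]; ring
    _ = (2:ZMod (3^k))⁻¹^s := by rw [two_mul_inv_two, one_pow, mul_one]

lemma castHom_lift (n : ℕ) (y : ZMod (3^n)) :
    ZMod.castHom (pow_dvd_pow 3 (Nat.le_succ n)) (ZMod (3^n)) ((y.val : ℕ) : ZMod (3^(n+1))) = y := by
  rw [map_natCast, ZMod.natCast_val, ZMod.cast_id]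

lemma syrFZ_snoc (n : ℕ) (b : Fin n → ℕ+) (c : ℕ+) :
    (2 : ZMod (3^(n+1)))^(c:ℕ) * syrFZ (n+1) (Fin.snoc b c)
      = 3 * (((syrFZ n b).val : ℕ) : ZMod (3^(n+1))) + 1 := by
  set U : ZMod (3^(n+1)) := ∑ m : Fin n, 3 ^ (n - 1 - (m : ℕ))
      * (2 : ZMod (3^(n+1)))⁻¹ ^ (∑ i ∈ Finset.Ici m, (b i : ℕ)) with hU
  have step1 : (2 : ZMod (3^(n+1)))^(c:ℕ) * syrFZ (n+1) (Fin.snoc b c) = 3 * U + 1 := by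
    rw [syrFZ, Fin.sum_univ_castSucc, mul_add]
    congr 1
    · rw [Finset.mul_sum, hU, Finset.mul_sum]
      apply Finset.sum_congr rfl
      intro m _
      rw [sum_Ici_snoc]
      simp only [Fin.coe_castSucc]
      rw [show n + 1 - 1 - (m:ℕ) = n - (m:ℕ) by omega]
      have : (2 : ZMod (3^(n+1)))^(c:ℕ) * (3 ^ (n - (m:ℕ))
          * (2 : ZMod (3^(n+1)))⁻¹ ^ ((∑ i ∈ Finset.Ici m, (b i : ℕ)) + c))
          = 3 ^ (n - (m:ℕ)) * ((2 : ZMod (3^(n+1)))^(c:ℕ)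
            * (2 : ZMod (3^(n+1)))⁻¹ ^ ((∑ i ∈ Finset.Ici m, (b i : ℕ)) + c)) := by
        ring
      rw [this, pow_mul_inv_pow]
      have hm : n - (m:ℕ) = (n - 1 - (m:ℕ)) + 1 := by have := m.isLt; omega
      rw [hm, pow_succ]
      ring
    · have hIci : Finset.Ici (Fin.last n) = {Fin.last n} := by
        ext i
        simp only [Finset.mem_Ici, Finset.mem_singleton, Fin.last_le_iff]
      rw [hIci, Finset.sum_singleton, Fin.snoc_last]
      simp only [Fin.val_last, Nat.add_sub_cancel, Nat.sub_self, pow_zero, one_mul]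
      calc (2 : ZMod (3^(n+1)))^(c:ℕ) * (2 : ZMod (3^(n+1)))⁻¹ ^ (c:ℕ)
          = ((2 : ZMod (3^(n+1))) * 2⁻¹)^(c:ℕ) := by rw [mul_pow]
        _ = 1 := by rw [two_mul_inv_two, one_pow]
  rw [step1]
  congr 1
  apply three_mul_congr
  rw [castHom_lift, hU, map_sum, syrFZ]
  apply Finset.sum_congr rfl
  intro m _
  rw [map_mul, map_pow, map_pow, map_ofNat, castHom_inv_two]

lemma key_cast (n : ℕ) (x : ZMod (3^(n+1))) (a : ℕ) :
    ((2^a * (x.val:ℤ) : ℤ) : ZMod (3^(n+1))) = (2 : ZMod (3^(n+1)))^a * x := by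
  haveI : NeZero ((3:ℕ)^(n+1)) := ⟨by positivity⟩
  push_cast
  rw [ZMod.natCast_val, ZMod.cast_id]

lemma cond3_iff_dvd (n : ℕ) (x : ZMod (3^(n+1))) (a : ℕ) :
    (ZMod.castHom (dvd_pow_self 3 (Nat.succ_ne_zero n)) (ZMod 3)
      ((2 : ZMod (3^(n+1)))^a * x) = 1) ↔ (3:ℤ) ∣ 2^a * (x.val:ℤ) - 1 := by
  rw [← key_cast, map_intCast]
  rw [show ((2^a * (x.val:ℤ) : ℤ) : ZMod 3) = 1 ↔ ((2^a * (x.val:ℤ) - 1 : ℤ) : ZMod 3) = 0 by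
    push_cast; constructor <;> intro h <;> [rw [h, sub_self]; linear_combination h]]
  rw [ZMod.intCast_zmod_eq_zero_iff_dvd]
  norm_num

lemma fiber_iff (n : ℕ) (x : ZMod (3^(n+1))) (y : ZMod (3^n)) (a : ℕ) :
    3 * ((y.val : ℕ) : ZMod (3^(n+1))) + 1 = (2 : ZMod (3^(n+1)))^a * x
      ↔ ((ZMod.castHom (dvd_pow_self 3 (Nat.succ_ne_zero n)) (ZMod 3)
            ((2 : ZMod (3^(n+1)))^a * x) = 1)
          ∧ y = (((2^a * (x.val:ℤ) - 1) / 3 : ℤ) : ZMod (3^n))) := by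
  constructor
  · intro h
    have hc : ZMod.castHom (dvd_pow_self 3 (Nat.succ_ne_zero n)) (ZMod 3)
        ((2 : ZMod (3^(n+1)))^a * x) = 1 := by
      rw [← h, map_add, map_mul, map_ofNat, map_one]
      rw [show ((3:ZMod 3)) = 0 by decide, zero_mul, zero_add]
    refine ⟨hc, ?_⟩
    have hdvd : (3:ℤ) ∣ 2^a * (x.val:ℤ) - 1 := (cond3_iff_dvd n x a).1 hc
    set t : ℤ := (2^a * (x.val:ℤ) - 1) / 3 with htdef
    have ht : 3 * t = 2^a * (x.val:ℤ) - 1 := Int.mul_ediv_cancel' hdvd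
    apply three_mul_lift_inj n
    have h1 : 3 * ((y.val : ℕ) : ZMod (3^(n+1))) = ((3 * t : ℤ) : ZMod (3^(n+1))) := by
      rw [ht, Int.cast_sub, Int.cast_one, key_cast n x a]
      linear_combination h
    have h2 : ((3 * t : ℤ) : ZMod (3^(n+1)))
        = 3 * ((((t : ZMod (3^n))).val : ℕ) : ZMod (3^(n+1))) := by
      push_cast
      apply three_mul_congr
      rw [castHom_lift, map_intCast]
    rw [h1, h2]
  · rintro ⟨hc, rfl⟩
    have hdvd : (3:ℤ) ∣ 2^a * (x.val:ℤ) - 1 := (cond3_iff_dvd n x a).1 hc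
    set t : ℤ := (2^a * (x.val:ℤ) - 1) / 3 with htdef
    have ht : 3 * t = 2^a * (x.val:ℤ) - 1 := Int.mul_ediv_cancel' hdvd
    have h2 : (3:ZMod (3^(n+1))) * ((((t : ZMod (3^n))).val : ℕ) : ZMod (3^(n+1)))
        = ((3 * t : ℤ) : ZMod (3^(n+1))) := by
      push_cast
      apply three_mul_congr
      rw [castHom_lift, map_intCast]
    rw [h2, ht, Int.cast_sub, Int.cast_one, key_cast n x a]
    ring

lemma pow_period (n : ℕ) : (2 : ZMod (3^(n+1)))^(2*3^n) = 1 := by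
  have hcop : Nat.Coprime 2 (3^(n+1)) := Nat.Coprime.pow_right _ (by decide)
  have htot : Nat.totient (3^(n+1)) = 3^n * 2 := by
    rw [Nat.totient_prime_pow Nat.prime_three (Nat.succ_pos n)]
    norm_num
  have := Nat.ModEq.pow_totient hcop
  rw [htot] at this
  have hcast : ((2^(3^n*2) : ℕ) : ZMod (3^(n+1))) = ((1 : ℕ) : ZMod (3^(n+1))) :=
    (ZMod.natCast_eq_natCast_iff _ _ _).2 this
  push_cast at hcast
  rw [show 2*3^n = 3^n*2 by ring]
  exact hcast

lemma pow_eq_period (n a k : ℕ) :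
    (2 : ZMod (3^(n+1)))^(a + 2*3^n*k) = (2 : ZMod (3^(n+1)))^a := by
  conv_lhs => rw [pow_add, pow_mul]
  rw [pow_period, one_pow, mul_one]

lemma int_pow_dvd (n a k : ℕ) : ((3:ℤ)^(n+1)) ∣ 2^(a + 2*3^n*k) - 2^a := by
  have h := pow_eq_period n a k
  have hcast : ((2^(a + 2*3^n*k) : ℕ) : ZMod (3^(n+1))) = ((2^a : ℕ) : ZMod (3^(n+1))) := by
    push_cast; exact h
  have := (ZMod.natCast_eq_natCast_iff _ _ _).1 hcast
  have hd := Nat.ModEq.dvd this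
  have : ((3:ℤ)^(n+1)) ∣ (2^a : ℤ) - (2^(a + 2*3^n*k) : ℤ) := by
    push_cast at hd ⊢; exact_mod_cast hd
  have := dvd_neg.2 this
  rw [neg_sub] at this
  exact this

lemma tcast_period (n : ℕ) (x : ZMod (3^(n+1))) (a k : ℕ)
    (h3 : (3:ℤ) ∣ 2^a * (x.val:ℤ) - 1) :
    (((2^(a + 2*3^n*k) * (x.val:ℤ) - 1) / 3 : ℤ) : ZMod (3^n))
      = (((2^a * (x.val:ℤ) - 1) / 3 : ℤ) : ZMod (3^n)) := by
  obtain ⟨s, hs⟩ := int_pow_dvd n a k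
  have h3c : (3:ℤ) ∣ 2^(a + 2*3^n*k) * (x.val:ℤ) - 1 := by
    have : (2:ℤ)^(a + 2*3^n*k) * (x.val:ℤ) - 1
        = (2^a * (x.val:ℤ) - 1) + ((2:ℤ)^(a + 2*3^n*k) - 2^a) * (x.val:ℤ) := by ring
    rw [this, hs]
    exact dvd_add h3 ⟨3^n * s * (x.val:ℤ), by ring⟩
  set tc : ℤ := (2^(a + 2*3^n*k) * (x.val:ℤ) - 1) / 3
  set ta : ℤ := (2^a * (x.val:ℤ) - 1) / 3
  have htc : 3 * tc = 2^(a + 2*3^n*k) * (x.val:ℤ) - 1 := Int.mul_ediv_cancel' h3c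
  have hta : 3 * ta = 2^a * (x.val:ℤ) - 1 := Int.mul_ediv_cancel' h3
  have hdiff : tc - ta = 3^n * (s * (x.val:ℤ)) := by
    have h33 : (3:ℤ) * (tc - ta) = 3 * (3^n * (s * (x.val:ℤ))) := by
      rw [mul_sub, htc, hta]
      have : (2:ℤ)^(a + 2*3^n*k) * (x.val:ℤ) - 1 - (2^a * (x.val:ℤ) - 1)
          = ((2:ℤ)^(a + 2*3^n*k) - 2^a) * (x.val:ℤ) := by ring
      rw [this, hs]; ring
    exact mul_left_cancel₀ (by norm_num) h33
  have : ((tc - ta : ℤ) : ZMod (3^n)) = 0 := by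
    rw [ZMod.intCast_zmod_eq_zero_iff_dvd]
    exact ⟨s * (x.val:ℤ), by rw [hdiff]; push_cast; ring⟩
  push_cast at this
  linear_combination this

def snocE (k : ℕ) : (ℕ+ × (Fin k → ℕ+)) ≃ (Fin (k+1) → ℕ+) where
  toFun p := Fin.snoc p.2 p.1
  invFun a := (a (Fin.last k), Fin.init a)
  left_inv p := by simp [Fin.snoc_last, Fin.init_snoc]
  right_inv a := by simp [Fin.snoc_init_self]

lemma two_zpow_neg (m : ℕ) : (2:ℝ)^(-(m:ℤ)) = (2⁻¹)^m := by
  rw [zpow_neg, zpow_natCast, inv_pow]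

lemma two_zpow_pos (z : ℤ) : (0:ℝ) < (2:ℝ)^z := zpow_pos (by norm_num) z

lemma summable_pnat_geom : Summable (fun c : ℕ+ => (2:ℝ)^(-((c:ℕ):ℤ))) := by
  have h : Summable (fun m : ℕ => (2:ℝ)^(-(m:ℤ))) := by
    apply Summable.congr (summable_geometric_two)
    intro m
    rw [two_zpow_neg, one_div]
  exact h.comp_injective PNat.coe_injective

lemma summable_base : ∀ (k : ℕ),
    Summable (fun a : Fin k → ℕ+ => (2:ℝ)^(-(∑ i, ((a i : ℕ):ℤ)))) := by
  intro k
  induction k with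
  | zero =>
    exact Summable.of_finite
  | succ k ih =>
    rw [← (snocE k).summable_iff]
    apply Summable.congr (Summable.mul_of_nonneg summable_pnat_geom ih
      (fun c => (two_zpow_pos _).le) (fun b => (two_zpow_pos _).le))
    intro p
    simp only [Function.comp_apply, snocE, Equiv.coe_fn_mk]
    rw [← zpow_add₀ (by norm_num : (2:ℝ) ≠ 0)]
    congr 1
    have : ∑ i : Fin (k+1), (((Fin.snoc p.2 p.1 : Fin (k+1) → ℕ+) i : ℕ):ℤ)
        = (∑ i : Fin k, ((p.2 i : ℕ):ℤ)) + ((p.1:ℕ):ℤ) := by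
      exact_mod_cast sum_snoc k p.2 p.1
    rw [this]; ring

lemma summable_if (k : ℕ) (x : ZMod (3^k)) :
    Summable (fun a : Fin k → ℕ+ =>
      if syrFZ k a = x then (2:ℝ) ^ (-(∑ i, ((a i : ℕ) : ℤ))) else 0) := by
  apply Summable.of_nonneg_of_le _ _ (summable_base k)
  · intro a; split <;> [exact (two_zpow_pos _).le; rfl]
  · intro a; split <;> [rfl; exact (two_zpow_pos _).le]

lemma syracP_nonneg (k : ℕ) (x : ZMod (3^k)) : 0 ≤ syracP k x := by
  apply tsum_nonneg
  intro a; split <;> [exact (two_zpow_pos _).le; rfl]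

lemma syracP_le (k : ℕ) (x : ZMod (3^k)) :
    syracP k x ≤ ∑' a : Fin k → ℕ+, (2:ℝ)^(-(∑ i, ((a i : ℕ):ℤ))) := by
  apply Summable.tsum_le_tsum _ (summable_if k x) (summable_base k)
  intro a; split <;> [rfl; exact (two_zpow_pos _).le]

def modE (N : ℕ) (hN : 0 < N) : ({a : ℕ // a ∈ Finset.Icc 1 N} × ℕ) ≃ ℕ+ where
  toFun p := ⟨p.1.1 + N * p.2, by have := (Finset.mem_Icc.1 p.1.2).1; omega⟩
  invFun c := (⟨((c:ℕ) - 1) % N + 1, Finset.mem_Icc.2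
      ⟨by omega, by have := Nat.mod_lt ((c:ℕ) - 1) hN; omega⟩⟩, ((c:ℕ) - 1) / N)
  left_inv := by
    rintro ⟨⟨a, ha⟩, k⟩
    obtain ⟨ha1, ha2⟩ := Finset.mem_Icc.1 ha
    have hmod : (a + N * k - 1) % N = a - 1 := by
      rw [show a + N * k - 1 = a - 1 + N * k by omega, Nat.add_mul_mod_self_left]
      exact Nat.mod_eq_of_lt (by omega)
    have hdiv : (a + N * k - 1) / N = k := by
      rw [show a + N * k - 1 = a - 1 + N * k by omega, Nat.add_mul_div_left _ _ hN,
        Nat.div_eq_of_lt (by omega)]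
      omega
    ext
    · simp only [PNat.mk_coe, hmod]; omega
    · simp only [PNat.mk_coe, hdiv]
  right_inv := by
    intro c
    have hc : 1 ≤ (c:ℕ) := c.2
    have := Nat.mod_add_div ((c:ℕ) - 1) N
    apply PNat.coe_injective
    simp only [PNat.mk_coe]
    omega


set_option maxHeartbeats 1000000 in
/-- The recursive formula for the Syracuse random variables: for `x ∈ ℤ/3^{n+1}ℤ`,
`P(Syrac(ℤ/3^{n+1}ℤ) = x) = (1 - 2^{-2·3^n})⁻¹ Σ_{1 ≤ a ≤ 2·3^n, 2^a x ≡ 1 mod 3}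
2^{-a} P(Syrac(ℤ/3^nℤ) = (2^a x - 1)/3)`. -/
theorem stmt_8 (n : ℕ) (x : ZMod (3 ^ (n + 1))) :
    syracP (n + 1) x
      = (1 - (2:ℝ) ^ (-(2 * 3 ^ n : ℤ)))⁻¹ *
        ∑ a ∈ Finset.Icc (1:ℕ) (2 * 3 ^ n),
          if ZMod.castHom (dvd_pow_self 3 (Nat.succ_ne_zero n)) (ZMod 3)
              ((2 : ZMod (3 ^ (n + 1))) ^ a * x) = 1 then
            (2:ℝ) ^ (-(a : ℤ)) *
              syracP n ((((2 ^ a * (x.val : ℤ) - 1) / 3 : ℤ) : ZMod (3 ^ n)))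
          else 0 := by
  have hNpos : 0 < 2 * 3 ^ n := by positivity
  set fr : ℕ → ℝ := fun a =>
      if ZMod.castHom (dvd_pow_self 3 (Nat.succ_ne_zero n)) (ZMod 3)
          ((2 : ZMod (3 ^ (n + 1))) ^ a * x) = 1 then
        (2:ℝ) ^ (-(a : ℤ)) *
          syracP n ((((2 ^ a * (x.val : ℤ) - 1) / 3 : ℤ) : ZMod (3 ^ n)))
      else 0 with hfrdef
  -- fiber characterization
  have hF : ∀ (c : ℕ+) (b : Fin n → ℕ+),
      (syrFZ (n+1) (Fin.snoc b c) = x) ↔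
        ((ZMod.castHom (dvd_pow_self 3 (Nat.succ_ne_zero n)) (ZMod 3)
            ((2 : ZMod (3 ^ (n + 1))) ^ (c:ℕ) * x) = 1)
          ∧ syrFZ n b = (((2 ^ (c:ℕ) * (x.val : ℤ) - 1) / 3 : ℤ) : ZMod (3 ^ n))) := by
    intro c b
    rw [← fiber_iff n x (syrFZ n b) (c:ℕ), ← syrFZ_snoc n b c]
    constructor
    · intro h; rw [h]
    · intro h
      exact ((isUnit_two (n+1)).pow (c:ℕ)).mul_left_cancel h
  -- step 1 : express as a sum over (c, b)
  have step1 : syracP (n+1) x = ∑' (c : ℕ+), fr (c:ℕ) := by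
    rw [show syracP (n+1) x = ∑' a : Fin (n+1) → ℕ+,
      (if syrFZ (n+1) a = x then (2:ℝ) ^ (-(∑ i, ((a i : ℕ) : ℤ))) else 0) from rfl]
    rw [← Equiv.tsum_eq (snocE n)]
    have hsum1 : Summable (fun p : ℕ+ × (Fin n → ℕ+) =>
        if syrFZ (n+1) ((snocE n) p) = x
          then (2:ℝ) ^ (-(∑ i, ((((snocE n) p) i : ℕ) : ℤ))) else 0) :=
      ((snocE n).summable_iff.2 (summable_if (n+1) x)).congr (fun p => rfl)
    have hsum2 : ∀ c : ℕ+, Summable (fun b : Fin n → ℕ+ =>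
        if syrFZ (n+1) ((snocE n) (c, b)) = x
          then (2:ℝ) ^ (-(∑ i, ((((snocE n) (c, b)) i : ℕ) : ℤ))) else 0) := by
      intro c
      apply Summable.of_nonneg_of_le _ _ (summable_base n)
      · intro b; split <;> [exact (two_zpow_pos _).le; rfl]
      · intro b
        split
        · rw [show (snocE n) (c, b) = Fin.snoc b c from rfl]
          have hexp : (∑ i, ((((Fin.snoc b c : Fin (n+1) → ℕ+)) i : ℕ) : ℤ))
              = (∑ i, ((b i : ℕ):ℤ)) + ((c:ℕ):ℤ) := by exact_mod_cast sum_snoc n b c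
          rw [hexp, neg_add, zpow_add₀ (by norm_num : (2:ℝ) ≠ 0)]
          apply mul_le_of_le_one_right (two_zpow_pos _).le
          rw [two_zpow_neg]
          exact pow_le_one₀ (by norm_num) (by norm_num)
        · exact (two_zpow_pos _).le
    rw [Summable.tsum_prod' hsum1 hsum2]
    apply tsum_congr
    intro c
    by_cases hc : ZMod.castHom (dvd_pow_self 3 (Nat.succ_ne_zero n)) (ZMod 3)
        ((2 : ZMod (3 ^ (n + 1))) ^ (c:ℕ) * x) = 1
    · have hb : ∀ b : Fin n → ℕ+,
          (if syrFZ (n+1) ((snocE n) (c, b)) = x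
            then (2:ℝ) ^ (-(∑ i, ((((snocE n) (c, b)) i : ℕ) : ℤ))) else 0)
          = (if syrFZ n b = (((2 ^ (c:ℕ) * (x.val : ℤ) - 1) / 3 : ℤ) : ZMod (3 ^ n))
              then (2:ℝ)^(-(∑ i, ((b i : ℕ):ℤ))) else 0)
              * (2:ℝ)^(-((c:ℕ):ℤ)) := by
        intro b
        have hsnoc : (snocE n) (c, b) = Fin.snoc b c := rfl
        have hexp : (∑ i, ((((Fin.snoc b c : Fin (n+1) → ℕ+)) i : ℕ) : ℤ))
            = (∑ i, ((b i : ℕ):ℤ)) + ((c:ℕ):ℤ) := by exact_mod_cast sum_snoc n b c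
        rw [hsnoc]
        by_cases hbb : syrFZ n b = (((2 ^ (c:ℕ) * (x.val : ℤ) - 1) / 3 : ℤ) : ZMod (3 ^ n))
        · rw [if_pos ((hF c b).2 ⟨hc, hbb⟩), if_pos hbb, hexp, neg_add,
            zpow_add₀ (by norm_num : (2:ℝ) ≠ 0)]
        · rw [if_neg (fun h => hbb ((hF c b).1 h).2), if_neg hbb, zero_mul]
      rw [tsum_congr hb, tsum_mul_right, hfrdef]
      dsimp only
      rw [if_pos hc]
      rw [show (∑' b : Fin n → ℕ+,
          if syrFZ n b = (((2 ^ (c:ℕ) * (x.val : ℤ) - 1) / 3 : ℤ) : ZMod (3 ^ n))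
            then (2:ℝ)^(-(∑ i, ((b i : ℕ):ℤ))) else 0)
          = syracP n ((((2 ^ (c:ℕ) * (x.val : ℤ) - 1) / 3 : ℤ) : ZMod (3 ^ n))) from rfl]
      ring
    · have hb : ∀ b : Fin n → ℕ+,
          (if syrFZ (n+1) ((snocE n) (c, b)) = x
            then (2:ℝ) ^ (-(∑ i, ((((snocE n) (c, b)) i : ℕ) : ℤ))) else 0) = 0 := by
        intro b
        exact if_neg (fun h => hc ((hF c b).1 h).1)
      rw [tsum_congr hb, tsum_zero, hfrdef]
      dsimp only
      rw [if_neg hc]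
  -- nonnegativity and summability of fr over ℕ+
  have hfr_nonneg : ∀ m : ℕ, 0 ≤ fr m := by
    intro m
    rw [hfrdef]
    dsimp only
    split
    · exact mul_nonneg (two_zpow_pos _).le (syracP_nonneg n _)
    · rfl
  have step2 : Summable (fun c : ℕ+ => fr (c:ℕ)) := by
    set M : ℝ := ∑' a : Fin n → ℕ+, (2:ℝ)^(-(∑ i, ((a i : ℕ):ℤ))) with hM
    have hM0 : 0 ≤ M := tsum_nonneg (fun a => (two_zpow_pos _).le)
    apply Summable.of_nonneg_of_le (fun c : ℕ+ => hfr_nonneg (c:ℕ))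
      (f := fun c : ℕ+ => (2:ℝ)^(-((c:ℕ):ℤ)) * M) _ (summable_pnat_geom.mul_right M)
    intro c
    rw [hfrdef]
    dsimp only
    split
    · exact mul_le_mul_of_nonneg_left (syracP_le n _) (two_zpow_pos _).le
    · exact mul_nonneg (two_zpow_pos _).le hM0
  -- periodicity of fr
  set r : ℝ := (2:ℝ)^(-((2 * 3 ^ n : ℕ):ℤ)) with hr
  have hr0 : 0 ≤ r := (two_zpow_pos _).le
  have hr1 : r < 1 := by
    rw [hr, two_zpow_neg]
    exact pow_lt_one₀ (by norm_num) (by norm_num) hNpos.ne'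
  have hfr_per : ∀ (a k : ℕ), fr (a + 2 * 3 ^ n * k) = fr a * r^k := by
    intro a k
    have hpow : (2 : ZMod (3^(n+1)))^(a + 2 * 3 ^ n * k) = (2 : ZMod (3^(n+1)))^a :=
      pow_eq_period n a k
    by_cases hc : ZMod.castHom (dvd_pow_self 3 (Nat.succ_ne_zero n)) (ZMod 3)
        ((2 : ZMod (3 ^ (n + 1))) ^ a * x) = 1
    · rw [hfrdef]
      dsimp only
      rw [hpow, if_pos hc, if_pos hc,
        tcast_period n x a k ((cond3_iff_dvd n x a).1 hc), hr,
        ← zpow_natCast ((2:ℝ)^(-((2 * 3 ^ n : ℕ):ℤ))) k, ← zpow_mul,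
        show (-(a:ℤ)) = -((a + 2 * 3 ^ n * k : ℕ):ℤ) - (-((2 * 3 ^ n : ℕ):ℤ) * (k:ℕ)) by
          push_cast; ring,
        zpow_sub₀ (by norm_num : (2:ℝ) ≠ 0)]
      field_simp
    · rw [hfrdef]
      dsimp only
      rw [hpow, if_neg hc, if_neg hc, zero_mul]
  clear_value fr
  clear_value r
  -- step 3 : reindex and sum the geometric series
  have step3 : ∑' (c : ℕ+), fr (c:ℕ)
      = ∑ a ∈ Finset.Icc 1 (2 * 3 ^ n), fr a * (1 - r)⁻¹ := by
    rw [← Equiv.tsum_eq (modE (2 * 3 ^ n) hNpos) (fun c : ℕ+ => fr (c:ℕ))]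
    have hcomp : ∀ p : {a : ℕ // a ∈ Finset.Icc 1 (2 * 3 ^ n)} × ℕ,
        fr (((modE (2 * 3 ^ n) hNpos) p : ℕ+) : ℕ) = fr p.1.1 * r ^ p.2 := by
      intro p
      rw [show (((modE (2 * 3 ^ n) hNpos) p : ℕ+) : ℕ) = p.1.1 + 2 * 3 ^ n * p.2 from rfl]
      exact hfr_per p.1.1 p.2
    calc ∑' (p : {a : ℕ // a ∈ Finset.Icc 1 (2 * 3 ^ n)} × ℕ),
          fr (((modE (2 * 3 ^ n) hNpos) p : ℕ+) : ℕ)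
        = ∑' (p : {a : ℕ // a ∈ Finset.Icc 1 (2 * 3 ^ n)} × ℕ), fr p.1.1 * r ^ p.2 :=
          tsum_congr hcomp
      _ = ∑' (a : {a : ℕ // a ∈ Finset.Icc 1 (2 * 3 ^ n)}), ∑' (k : ℕ), fr a.1 * r ^ k := by
          apply Summable.tsum_prod'
          · apply (((modE (2 * 3 ^ n) hNpos).summable_iff.2 step2).congr)
            intro p
            rw [Function.comp_apply]
            exact hcomp p
          · intro a
            dsimp only
            exact (summable_geometric_of_lt_one hr0 hr1).mul_left _
      _ = ∑' (a : {a : ℕ // a ∈ Finset.Icc 1 (2 * 3 ^ n)}), fr a.1 * (1 - r)⁻¹ := by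
          apply tsum_congr
          intro a
          rw [tsum_mul_left, tsum_geometric_of_lt_one hr0 hr1]
      _ = ∑ a ∈ Finset.Icc 1 (2 * 3 ^ n), fr a * (1 - r)⁻¹ :=
          Finset.tsum_subtype (Finset.Icc 1 (2 * 3 ^ n)) (fun a => fr a * (1 - r)⁻¹)
  rw [step1, step3, ← Finset.sum_mul, mul_comm]
  congr 1
  rw [hr]
  push_cast
  ring_nf
end
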